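/- There is an absolute constant K such that for all integers m, n ≥ 2, the number q(m,n) of proper pairs of oriented segments in 𝒢_{m,n} and the number p(m,n) of unordered pairs of prime segments in convex position with endpoints in 𝒢_{m,n} satisfy |q(m,n) − p(m,n)| ≤ K·m³n³(m+n). -/

import Mathlib

open scoped Real

noncomputable section

/-- Integer 2×2 determinant of two planar vectors. -/
def detZ (v w : ℤ × ℤ) : ℤ := v.1 * w.2 - v.2 * w.1

/-- Real 2×2 determinant of two planar vectors. -/
def detR (v w : ℝ × ℝ) : ℝ := v.1 * w.2 - v.2 * w.1

/-- The grid 𝒢_{m,n} = {0,…,m−1} × {0,…,n−1} of integer points. -/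
def Grid (m n : ℕ) : Set (ℤ × ℤ) :=
  {p | 0 ≤ p.1 ∧ p.1 < (m : ℤ) ∧ 0 ≤ p.2 ∧ p.2 < (n : ℤ)}

/-- The boundary B(𝒢_{m,n}) of the grid. -/
def GridBoundary (m n : ℕ) : Set (ℤ × ℤ) :=
  {p | p ∈ Grid m n ∧ (p.1 = 0 ∨ p.1 = (m : ℤ) - 1 ∨ p.2 = 0 ∨ p.2 = (n : ℤ) - 1)}

/-- The segment AB is prime: A, B are the only integer points on it
(equivalently, the coordinates of B − A are coprime). -/
def PrimeSeg (A B : ℤ × ℤ) : Prop := Int.gcd (B.1 - A.1) (B.2 - A.2) = 1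

/-- f_{→AB}(X) = 1 : X on the line through A, B and strictly closer to A than to B,
or the triangle →ABX is counterclockwise. -/
def SegTrue (A B X : ℤ × ℤ) : Prop :=
  (detZ (B - A) (X - A) = 0 ∧
    (X.1 - A.1) ^ 2 + (X.2 - A.2) ^ 2 < (X.1 - B.1) ^ 2 + (X.2 - B.2) ^ 2) ∨
  0 < detZ (B - A) (X - A)

/-- The pair of oriented segments (→AB, →CD) with endpoints in 𝒢_{m,n} is proper. -/
def ProperPair (m n : ℕ) (A B C D : ℤ × ℤ) : Prop :=
  A ∈ Grid m n ∧ B ∈ Grid m n ∧ C ∈ Grid m n ∧ D ∈ Grid m n ∧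
  PrimeSeg A B ∧ PrimeSeg C D ∧
  SegTrue C D A ∧ SegTrue C D B ∧ SegTrue A B C ∧ SegTrue A B D

/-- A, B, C, D (in this cyclic order) are the vertices of a (strictly) convex
quadrilateral with sides AB, BC, CD, DA. -/
def QuadConv (A B C D : ℤ × ℤ) : Prop :=
  (0 < detZ (B - A) (C - B) ∧ 0 < detZ (C - B) (D - C) ∧
    0 < detZ (D - C) (A - D) ∧ 0 < detZ (A - D) (B - A)) ∨
  (detZ (B - A) (C - B) < 0 ∧ detZ (C - B) (D - C) < 0 ∧
    detZ (D - C) (A - D) < 0 ∧ detZ (A - D) (B - A) < 0)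

/-- The segments AB and CD are in convex position: A, B, C, D are the vertices of a
convex quadrilateral in which AB and CD are opposite sides. -/
def ConvexPos (A B C D : ℤ × ℤ) : Prop := QuadConv A B C D ∨ QuadConv A B D C

/-- Real-plane version of `QuadConv`. -/
def QuadConvR (A B C D : ℝ × ℝ) : Prop :=
  (0 < detR (B - A) (C - B) ∧ 0 < detR (C - B) (D - C) ∧
    0 < detR (D - C) (A - D) ∧ 0 < detR (A - D) (B - A)) ∨
  (detR (B - A) (C - B) < 0 ∧ detR (C - B) (D - C) < 0 ∧
    detR (D - C) (A - D) < 0 ∧ detR (A - D) (B - A) < 0)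

/-- Real-plane version of `ConvexPos`. -/
def ConvexPosR (A B C D : ℝ × ℝ) : Prop := QuadConvR A B C D ∨ QuadConvR A B D C

/-- Embedding of integer points into the real plane. -/
def ptR (p : ℤ × ℤ) : ℝ × ℝ := ((p.1 : ℝ), (p.2 : ℝ))

/-- Embedding of integer points into the Euclidean plane. -/
def ptE (p : ℤ × ℤ) : EuclideanSpace ℝ (Fin 2) := WithLp.toLp 2 ![(p.1 : ℝ), (p.2 : ℝ)]

/-- A threshold function on 𝒢_{m,n}, identified with its set T of true points:
the convex hulls of true and false points are disjoint. -/
def IsThresholdSet (m n : ℕ) (T : Set (ℤ × ℤ)) : Prop :=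
  T ⊆ Grid m n ∧
  Disjoint (convexHull ℝ (ptR '' T)) (convexHull ℝ (ptR '' (Grid m n \ T)))

/-- A 2-threshold function on 𝒢_{m,n}, identified with its set of true points. -/
def IsTwoThresholdSet (m n : ℕ) (T : Set (ℤ × ℤ)) : Prop :=
  ∃ T₁ T₂ : Set (ℤ × ℤ), IsThresholdSet m n T₁ ∧ IsThresholdSet m n T₂ ∧ T = T₁ ∩ T₂

/-- t₂(m,n): the number of 2-threshold functions on 𝒢_{m,n}. -/
def t2 (m n : ℕ) : ℕ := {T : Set (ℤ × ℤ) | IsTwoThresholdSet m n T}.ncard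

/-- The set of proper (unordered) pairs of oriented segments in 𝒢_{m,n}. -/
def ProperPairs (m n : ℕ) : Set (Sym2 ((ℤ × ℤ) × (ℤ × ℤ))) :=
  {z | ∃ A B C D : ℤ × ℤ, z = s((A, B), (C, D)) ∧ ProperPair m n A B C D}

/-- q(m,n): the number of proper pairs of oriented segments in 𝒢_{m,n}. -/
def qcount (m n : ℕ) : ℕ := (ProperPairs m n).ncard

/-- The set of unordered pairs of (non-oriented) prime segments with endpoints in
𝒢_{m,n} that are in convex position. -/
def ConvexPrimePairs (m n : ℕ) : Set (Sym2 (Sym2 (ℤ × ℤ))) :=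
  {z | ∃ A B C D : ℤ × ℤ, z = s(s(A, B), s(C, D)) ∧
    A ∈ Grid m n ∧ B ∈ Grid m n ∧ C ∈ Grid m n ∧ D ∈ Grid m n ∧
    PrimeSeg A B ∧ PrimeSeg C D ∧ ConvexPos A B C D}

/-- p(m,n): the number of unordered pairs of prime segments in convex position with
endpoints in 𝒢_{m,n}. -/
def pcount (m n : ℕ) : ℕ := (ConvexPrimePairs m n).ncard

/-- The axis-aligned bounding box of {A,B,C,D} is the rectangle [0,u]×[0,v]. -/
def InBBox (u v : ℕ) (A B C D : ℤ × ℤ) : Prop :=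
  min (min A.1 B.1) (min C.1 D.1) = 0 ∧
  max (max A.1 B.1) (max C.1 D.1) = (u : ℤ) ∧
  min (min A.2 B.2) (min C.2 D.2) = 0 ∧
  max (max A.2 B.2) (max C.2 D.2) = (v : ℤ)

/-- The pair {AB, CD} of prime segments is in convex position with bounding box
ℛ_{u,v} = [0,u]×[0,v]. -/
def ZPair (u v : ℕ) (A B C D : ℤ × ℤ) : Prop :=
  PrimeSeg A B ∧ PrimeSeg C D ∧ ConvexPos A B C D ∧ InBBox u v A B C D

/-- Z(u,v): pairs of prime segments in convex position with bounding box ℛ_{u,v}. -/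
def Zset (u v : ℕ) : Set (Sym2 (Sym2 (ℤ × ℤ))) :=
  {z | ∃ A B C D : ℤ × ℤ, z = s(s(A, B), s(C, D)) ∧ ZPair u v A B C D}

/-- P is a corner (vertex) of the rectangle ℛ_{u,v} = [0,u]×[0,v]. -/
def RectCorner (u v : ℕ) (P : ℤ × ℤ) : Prop :=
  (P.1 = 0 ∨ P.1 = (u : ℤ)) ∧ (P.2 = 0 ∨ P.2 = (v : ℤ))

/-- The number of points among A, B, C, D that are corners of ℛ_{u,v}. -/
def cornerCount (u v : ℕ) (A B C D : ℤ × ℤ) : ℕ :=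
  {P : ℤ × ℤ | P ∈ ({A, B, C, D} : Set (ℤ × ℤ)) ∧ RectCorner u v P}.ncard

/-- Z_i(u,v): the pairs in Z(u,v) with exactly i endpoints at corners of ℛ_{u,v}. -/
def Zi (i u v : ℕ) : Set (Sym2 (Sym2 (ℤ × ℤ))) :=
  {z | ∃ A B C D : ℤ × ℤ, z = s(s(A, B), s(C, D)) ∧ ZPair u v A B C D ∧
    cornerCount u v A B C D = i}

/-- Z₂ᵃ(u,v): exactly two corner endpoints, lying at adjacent corners of ℛ_{u,v}. -/
def Z2a (u v : ℕ) : Set (Sym2 (Sym2 (ℤ × ℤ))) :=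
  {z | ∃ A B C D : ℤ × ℤ, z = s(s(A, B), s(C, D)) ∧ ZPair u v A B C D ∧
    cornerCount u v A B C D = 2 ∧
    ∃ X Y : ℤ × ℤ, X ∈ ({A, B, C, D} : Set (ℤ × ℤ)) ∧ Y ∈ ({A, B, C, D} : Set (ℤ × ℤ)) ∧
      X ≠ Y ∧ RectCorner u v X ∧ RectCorner u v Y ∧ (X.1 = Y.1 ∨ X.2 = Y.2)}

/-- Z₂ᵇ(u,v): exactly two corner endpoints, at opposite corners of ℛ_{u,v},
both on the same segment of the pair. -/
def Z2b (u v : ℕ) : Set (Sym2 (Sym2 (ℤ × ℤ))) :=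
  {z | ∃ A B C D : ℤ × ℤ, z = s(s(A, B), s(C, D)) ∧ ZPair u v A B C D ∧
    cornerCount u v A B C D = 2 ∧
    RectCorner u v A ∧ RectCorner u v B ∧ A.1 ≠ B.1 ∧ A.2 ≠ B.2}

/-- Z₂ᶜ(u,v): exactly two corner endpoints, at opposite corners of ℛ_{u,v},
belonging to different segments of the pair. -/
def Z2c (u v : ℕ) : Set (Sym2 (Sym2 (ℤ × ℤ))) :=
  {z | ∃ A B C D : ℤ × ℤ, z = s(s(A, B), s(C, D)) ∧ ZPair u v A B C D ∧
    cornerCount u v A B C D = 2 ∧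
    RectCorner u v A ∧ RectCorner u v C ∧ A.1 ≠ C.1 ∧ A.2 ≠ C.2}

/-- Z₁ᵃ(u,v): exactly one corner endpoint A; the other endpoint B of the segment
containing A is an interior point of ℛ_{u,v}. -/
def Z1a (u v : ℕ) : Set (Sym2 (Sym2 (ℤ × ℤ))) :=
  {z | ∃ A B C D : ℤ × ℤ, z = s(s(A, B), s(C, D)) ∧ ZPair u v A B C D ∧
    cornerCount u v A B C D = 1 ∧ RectCorner u v A ∧
    0 < B.1 ∧ B.1 < (u : ℤ) ∧ 0 < B.2 ∧ B.2 < (v : ℤ)}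

/-- Z₁ᵇ(u,v): exactly one corner endpoint A; the other endpoint B of the segment
containing A lies on the boundary of ℛ_{u,v}. -/
def Z1b (u v : ℕ) : Set (Sym2 (Sym2 (ℤ × ℤ))) :=
  {z | ∃ A B C D : ℤ × ℤ, z = s(s(A, B), s(C, D)) ∧ ZPair u v A B C D ∧
    cornerCount u v A B C D = 1 ∧ RectCorner u v A ∧
    (B.1 = 0 ∨ B.1 = (u : ℤ) ∨ B.2 = 0 ∨ B.2 = (v : ℤ))}

end

/-!
Call two oriented segments `→AB`, `→CD` generic if no three of `A, B, C, D` are collinear. Then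
`f_{→AB}` and `f_{→CD}` only see signs of determinants, so `(→AB, →CD)` is proper exactly when each
segment lies strictly to the left of the other, i.e. when `ABCD` is a counterclockwise convex
quadrilateral. Each generic pair in convex position admits exactly one such orientation, so
forgetting orientations is a bijection between generic proper pairs and generic pairs in convex
position. A non-generic configuration contains a collinear triple `P, Q, R` with `P ≠ Q`, and there
are at most `(mn)³(m+n)` such triples together with a fourth grid point, because `R` is determined
by the line `PQ` and one of its coordinates.
-/

open Set

lemma detZ_sub_sub_swap (A B X : ℤ × ℤ) : detZ (A - B) (X - B) = -detZ (B - A) (X - A) := by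
  simp only [detZ, Prod.fst_sub, Prod.snd_sub]
  ring

lemma PrimeSeg.symm {A B : ℤ × ℤ} (h : PrimeSeg A B) : PrimeSeg B A := by
  rwa [PrimeSeg, ← neg_sub B.1, ← neg_sub B.2, Int.neg_gcd, Int.gcd_neg]

lemma PrimeSeg.ne {A B : ℤ × ℤ} (h : PrimeSeg A B) : A ≠ B := by
  rintro rfl
  simp [PrimeSeg] at h

def OnLine (A B X : ℤ × ℤ) : Prop := detZ (B - A) (X - A) = 0

def LeftOf (A B X : ℤ × ℤ) : Prop := 0 < detZ (B - A) (X - A)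

lemma LeftOf.not_swap {A B X : ℤ × ℤ} (h : LeftOf A B X) : ¬ LeftOf B A X := by
  rw [LeftOf, detZ_sub_sub_swap]
  exact fun h' => (neg_pos.mp h').not_gt h

lemma segTrue_iff_leftOf {A B X : ℤ × ℤ} (hX : ¬ OnLine A B X) : SegTrue A B X ↔ LeftOf A B X :=
  ⟨fun h => h.resolve_left fun h' => hX h'.1, Or.inr⟩

/-- `OnLine C D A` means that `A, C, D` are collinear: the four conjuncts are the four triples. -/
def NoThreeCollinear (A B C D : ℤ × ℤ) : Prop :=
  ¬ OnLine C D A ∧ ¬ OnLine C D B ∧ ¬ OnLine A B C ∧ ¬ OnLine A B D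

def LeftOfEachOther (A B C D : ℤ × ℤ) : Prop :=
  LeftOf C D A ∧ LeftOf C D B ∧ LeftOf A B C ∧ LeftOf A B D

section Orientation

variable {A B C D : ℤ × ℤ}

lemma LeftOfEachOther.noThreeCollinear (h : LeftOfEachOther A B C D) :
    NoThreeCollinear A B C D :=
  ⟨h.1.ne', h.2.1.ne', h.2.2.1.ne', h.2.2.2.ne'⟩

lemma LeftOfEachOther.symm (h : LeftOfEachOther A B C D) : LeftOfEachOther C D A B :=
  ⟨h.2.2.1, h.2.2.2, h.1, h.2.1⟩

lemma properPair_iff {m n : ℕ} (hg : NoThreeCollinear A B C D) :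
    ProperPair m n A B C D ↔
      A ∈ Grid m n ∧ B ∈ Grid m n ∧ C ∈ Grid m n ∧ D ∈ Grid m n ∧
        PrimeSeg A B ∧ PrimeSeg C D ∧ LeftOfEachOther A B C D := by
  rw [ProperPair, LeftOfEachOther, segTrue_iff_leftOf hg.1, segTrue_iff_leftOf hg.2.1,
    segTrue_iff_leftOf hg.2.2.1, segTrue_iff_leftOf hg.2.2.2]

/- The turning determinants of the quadrilateral `ABCD` coincide with the four determinants of
`LeftOfEachOther A B C D`, e.g. `detZ (B - A) (C - B) = detZ (B - A) (C - A)`. -/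
lemma LeftOfEachOther.quadConv (h : LeftOfEachOther A B C D) : QuadConv A B C D := by
  obtain ⟨h₁, h₂, h₃, h₄⟩ := h
  simp only [LeftOf, detZ, Prod.fst_sub, Prod.snd_sub] at h₁ h₂ h₃ h₄
  left
  simp only [detZ, Prod.fst_sub, Prod.snd_sub]
  refine ⟨?_, ?_, ?_, ?_⟩ <;> linarith

lemma QuadConv.leftOfEachOther (h : QuadConv A B C D) :
    LeftOfEachOther A B C D ∨ LeftOfEachOther D C B A := by
  simp only [QuadConv, LeftOfEachOther, LeftOf, detZ, Prod.fst_sub, Prod.snd_sub] at h ⊢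
  rcases h with ⟨h₁, h₂, h₃, h₄⟩ | ⟨h₁, h₂, h₃, h₄⟩
  · left
    refine ⟨?_, ?_, ?_, ?_⟩ <;> linarith
  · right
    refine ⟨?_, ?_, ?_, ?_⟩ <;> linarith

lemma ConvexPos.leftOfEachOther (h : ConvexPos A B C D) :
    LeftOfEachOther A B C D ∨ LeftOfEachOther D C B A ∨
      LeftOfEachOther A B D C ∨ LeftOfEachOther C D B A := by
  rcases h with h | h
  · exact h.leftOfEachOther.elim Or.inl (Or.inr ∘ Or.inl)
  · exact h.leftOfEachOther.elim (Or.inr ∘ Or.inr ∘ Or.inl) (Or.inr ∘ Or.inr ∘ Or.inr)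

lemma LeftOfEachOther.eq_of_mk_eq {A' B' C' D' : ℤ × ℤ} (h : LeftOfEachOther A B C D)
    (h' : LeftOfEachOther A' B' C' D') (hAB : s(A, B) = s(A', B')) (hCD : s(C, D) = s(C', D')) :
    (A, B) = (A', B') ∧ (C, D) = (C', D') := by
  rw [Sym2.eq_iff] at hAB hCD
  rcases hAB with ⟨rfl, rfl⟩ | ⟨rfl, rfl⟩ <;> rcases hCD with ⟨rfl, rfl⟩ | ⟨rfl, rfl⟩
  · exact ⟨rfl, rfl⟩
  · exact (h.1.not_swap h'.1).elim
  · exact (h.2.2.1.not_swap h'.2.2.1).elim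
  · exact (h.2.2.1.not_swap h'.2.2.2).elim

end Orientation

section Bijection

def forgetOrientation {α : Type*} : Sym2 (α × α) → Sym2 (Sym2 α) :=
  Sym2.map fun p => s(p.1, p.2)

lemma forgetOrientation_mk {α : Type*} (a b c d : α) :
    forgetOrientation s((a, b), (c, d)) = s(s(a, b), s(c, d)) :=
  rfl

variable (m n : ℕ)

def genericProperPairs : Set (Sym2 ((ℤ × ℤ) × (ℤ × ℤ))) :=
  {z | ∃ A B C D : ℤ × ℤ, z = s((A, B), (C, D)) ∧ ProperPair m n A B C D ∧
    NoThreeCollinear A B C D}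

def genericConvexPrimePairs : Set (Sym2 (Sym2 (ℤ × ℤ))) :=
  {z | ∃ A B C D : ℤ × ℤ, z = s(s(A, B), s(C, D)) ∧
    A ∈ Grid m n ∧ B ∈ Grid m n ∧ C ∈ Grid m n ∧ D ∈ Grid m n ∧
    PrimeSeg A B ∧ PrimeSeg C D ∧ ConvexPos A B C D ∧ NoThreeCollinear A B C D}

lemma genericProperPairs_subset : genericProperPairs m n ⊆ ProperPairs m n := by
  rintro z ⟨A, B, C, D, rfl, hp, -⟩
  exact ⟨A, B, C, D, rfl, hp⟩

lemma genericConvexPrimePairs_subset : genericConvexPrimePairs m n ⊆ ConvexPrimePairs m n := by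
  rintro z ⟨A, B, C, D, rfl, hA, hB, hC, hD, hAB, hCD, hc, -⟩
  exact ⟨A, B, C, D, rfl, hA, hB, hC, hD, hAB, hCD, hc⟩

variable {m n}

lemma mk_mem_image_genericProperPairs {A B C D : ℤ × ℤ}
    (hA : A ∈ Grid m n) (hB : B ∈ Grid m n) (hC : C ∈ Grid m n) (hD : D ∈ Grid m n)
    (hAB : PrimeSeg A B) (hCD : PrimeSeg C D) (h : LeftOfEachOther A B C D) :
    s(s(A, B), s(C, D)) ∈ forgetOrientation '' genericProperPairs m n :=
  ⟨s((A, B), (C, D)), ⟨A, B, C, D, rfl,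
    (properPair_iff h.noThreeCollinear).2 ⟨hA, hB, hC, hD, hAB, hCD, h⟩, h.noThreeCollinear⟩,
    forgetOrientation_mk _ _ _ _⟩

lemma image_genericProperPairs :
    forgetOrientation '' genericProperPairs m n = genericConvexPrimePairs m n := by
  refine Subset.antisymm ?_ ?_
  · rintro _ ⟨_, ⟨A, B, C, D, rfl, hp, hg⟩, rfl⟩
    obtain ⟨hA, hB, hC, hD, hAB, hCD, h⟩ := (properPair_iff hg).1 hp
    exact ⟨A, B, C, D, forgetOrientation_mk _ _ _ _, hA, hB, hC, hD, hAB, hCD,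
      Or.inl h.quadConv, hg⟩
  · rintro _ ⟨A, B, C, D, rfl, hA, hB, hC, hD, hAB, hCD, hc, -⟩
    rcases hc.leftOfEachOther with h | h | h | h
    · exact mk_mem_image_genericProperPairs hA hB hC hD hAB hCD h
    · convert mk_mem_image_genericProperPairs hD hC hB hA hCD.symm hAB.symm h using 1
      rw [Sym2.eq_swap, Sym2.eq_swap (a := D), Sym2.eq_swap (a := B)]
    · convert mk_mem_image_genericProperPairs hA hB hD hC hAB hCD.symm h using 1
      rw [Sym2.eq_swap (a := D)]
    · convert mk_mem_image_genericProperPairs hC hD hB hA hCD hAB.symm h using 1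
      rw [Sym2.eq_swap, Sym2.eq_swap (a := B)]

lemma injOn_genericProperPairs : InjOn forgetOrientation (genericProperPairs m n) := by
  rintro _ ⟨A, B, C, D, rfl, hp, hg⟩ _ ⟨A', B', C', D', rfl, hp', hg'⟩ heq
  have h := ((properPair_iff hg).1 hp).2.2.2.2.2.2
  have h' := ((properPair_iff hg').1 hp').2.2.2.2.2.2
  rw [forgetOrientation_mk, forgetOrientation_mk, Sym2.eq_iff] at heq
  rcases heq with ⟨e₁, e₂⟩ | ⟨e₁, e₂⟩
  · obtain ⟨f₁, f₂⟩ := h.eq_of_mk_eq h' e₁ e₂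
    rw [f₁, f₂]
  · obtain ⟨f₁, f₂⟩ := h.eq_of_mk_eq h'.symm e₁ e₂
    rw [f₁, f₂, Sym2.eq_swap]

lemma ncard_genericConvexPrimePairs :
    (genericConvexPrimePairs m n).ncard = (genericProperPairs m n).ncard := by
  rw [← image_genericProperPairs, injOn_genericProperPairs.ncard_image]

end Bijection

section Counting

abbrev PointQuad := (ℤ × ℤ) × (ℤ × ℤ) × (ℤ × ℤ) × (ℤ × ℤ)

variable (m n : ℕ)

lemma ncard_Ico_zero_natCast (k : ℕ) : (Ico (0 : ℤ) k).ncard = k := by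
  rw [ncard_eq_toFinset_card', toFinset_Ico, Int.card_Ico, sub_zero, Int.toNat_natCast]

lemma grid_eq_Ico_prod_Ico : Grid m n = Ico (0 : ℤ) m ×ˢ Ico (0 : ℤ) n := by
  ext p
  simp [Grid, and_assoc]

lemma grid_finite : (Grid m n).Finite := by
  rw [grid_eq_Ico_prod_Ico]
  exact (finite_Ico _ _).prod (finite_Ico _ _)

lemma ncard_grid : (Grid m n).ncard = m * n := by
  rw [grid_eq_Ico_prod_Ico, ncard_prod, ncard_Ico_zero_natCast, ncard_Ico_zero_natCast]

def grid4 : Set PointQuad := Grid m n ×ˢ Grid m n ×ˢ Grid m n ×ˢ Grid m n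

lemma grid4_finite : (grid4 m n).Finite :=
  (grid_finite m n).prod ((grid_finite m n).prod ((grid_finite m n).prod (grid_finite m n)))

def collinearQuads : Set PointQuad :=
  {t ∈ grid4 m n | t.1 ≠ t.2.1 ∧ OnLine t.1 t.2.1 t.2.2.1}

def degenerateQuads : Set PointQuad :=
  {t ∈ grid4 m n | t.1 ≠ t.2.1 ∧ t.2.2.1 ≠ t.2.2.2 ∧
    ¬ NoThreeCollinear t.1 t.2.1 t.2.2.1 t.2.2.2}

variable {m n}

lemma eq_of_onLine_of_fst_eq {P Q R R' : ℤ × ℤ} (hPQ : P.1 ≠ Q.1) (hR : OnLine P Q R)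
    (hR' : OnLine P Q R') (h : R.1 = R'.1) : R = R' := by
  simp only [OnLine, detZ, Prod.fst_sub, Prod.snd_sub] at hR hR'
  have : (Q.1 - P.1) * (R.2 - R'.2) = 0 := by linear_combination hR - hR' + (Q.2 - P.2) * h
  exact Prod.ext h (sub_eq_zero.mp ((mul_eq_zero.mp this).resolve_left (sub_ne_zero.mpr hPQ.symm)))

lemma eq_of_onLine_of_snd_eq {P Q R R' : ℤ × ℤ} (hPQ : P.2 ≠ Q.2) (hR : OnLine P Q R)
    (hR' : OnLine P Q R') (h : R.2 = R'.2) : R = R' := by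
  simp only [OnLine, detZ, Prod.fst_sub, Prod.snd_sub] at hR hR'
  have : (Q.2 - P.2) * (R.1 - R'.1) = 0 := by linear_combination hR' - hR + (Q.1 - P.1) * h
  exact Prod.ext (sub_eq_zero.mp ((mul_eq_zero.mp this).resolve_left (sub_ne_zero.mpr hPQ.symm))) h

/- A point of a line through two distinct grid points is determined by its first coordinate,
or, if the line is vertical, by its second one; both lie in `[0, m + n)`. -/
lemma ncard_collinearQuads_le : (collinearQuads m n).ncard ≤ (m * n) ^ 3 * (m + n) := by
  let key : PointQuad → (ℤ × ℤ) × (ℤ × ℤ) × ℤ × (ℤ × ℤ) := fun t =>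
    (t.1, t.2.1, if t.1.1 ≠ t.2.1.1 then t.2.2.1.1 else t.2.2.1.2, t.2.2.2)
  have hmaps : ∀ t ∈ collinearQuads m n,
      key t ∈ Grid m n ×ˢ Grid m n ×ˢ Ico (0 : ℤ) (m + n : ℕ) ×ˢ Grid m n := by
    rintro ⟨P, Q, R, S⟩ ⟨⟨hP, hQ, ⟨hR₁, hR₁', hR₂, hR₂'⟩, hS⟩, -⟩
    refine ⟨hP, hQ, ?_, hS⟩
    dsimp only at hR₁ hR₁' hR₂ hR₂'
    simp only [key, mem_Ico]
    split_ifs <;> omega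
  have hinj : InjOn key (collinearQuads m n) := by
    rintro ⟨P, Q, R, S⟩ ⟨-, hPQ, hR⟩ ⟨P', Q', R', S'⟩ ⟨-, -, hR'⟩ heq
    dsimp only at hPQ hR hR'
    simp only [key, Prod.mk.injEq] at heq
    obtain ⟨rfl, rfl, hc, rfl⟩ := heq
    by_cases hx : P.1 = Q.1
    · have hy : P.2 ≠ Q.2 := fun hy => hPQ (Prod.ext hx hy)
      simp only [hx, ne_eq, not_true_eq_false, if_false] at hc
      obtain rfl := eq_of_onLine_of_snd_eq hy hR hR' hc
      rfl
    · simp only [hx, ne_eq, not_false_eq_true, if_true] at hc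
      obtain rfl := eq_of_onLine_of_fst_eq hx hR hR' hc
      rfl
  refine (ncard_le_ncard_of_injOn key hmaps hinj ?_).trans_eq ?_
  · exact (grid_finite m n).prod ((grid_finite m n).prod ((finite_Ico _ _).prod (grid_finite m n)))
  · rw [ncard_prod, ncard_prod, ncard_prod, ncard_grid, ncard_Ico_zero_natCast]
    ring

lemma degenerateQuads_subset : degenerateQuads m n ⊆ collinearQuads m n ∪
    ((fun t : PointQuad => (t.2.2.1, t.2.2.2, t.1, t.2.1)) '' collinearQuads m n ∪
      ((fun t : PointQuad => (t.2.2.2, t.2.2.1, t.1, t.2.1)) '' collinearQuads m n ∪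
        (fun t : PointQuad => (t.1, t.2.1, t.2.2.2, t.2.2.1)) '' collinearQuads m n)) := by
  rintro ⟨A, B, C, D⟩ ⟨⟨hA, hB, hC, hD⟩, hAB, hCD, hg⟩
  simp only [NoThreeCollinear, not_and_or, not_not] at hg
  rcases hg with h | h | h | h
  · exact Or.inr (Or.inl ⟨(C, D, A, B), ⟨⟨hC, hD, hA, hB⟩, hCD, h⟩, rfl⟩)
  · exact Or.inr (Or.inr (Or.inl ⟨(C, D, B, A), ⟨⟨hC, hD, hB, hA⟩, hCD, h⟩, rfl⟩))
  · exact Or.inl ⟨⟨hA, hB, hC, hD⟩, hAB, h⟩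
  · exact Or.inr (Or.inr (Or.inr ⟨(A, B, D, C), ⟨⟨hA, hB, hD, hC⟩, hAB, h⟩, rfl⟩))

lemma ncard_degenerateQuads_le :
    (degenerateQuads m n).ncard ≤ 4 * ((m * n) ^ 3 * (m + n)) := by
  have hfin : (collinearQuads m n).Finite := (grid4_finite m n).subset (sep_subset _ _)
  have h := ncard_le_ncard degenerateQuads_subset
    (hfin.union ((hfin.image _).union ((hfin.image _).union (hfin.image _))))
  grw [ncard_union_le, ncard_union_le, ncard_union_le, ncard_image_le hfin, ncard_image_le hfin,
    ncard_image_le hfin, ncard_collinearQuads_le] at h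
  linarith

end Counting

lemma Set.ncard_le_of_subset_image {α β : Type*} {s : Set α} {t : Set β} {f : α → β}
    (hs : s.Finite) (h : t ⊆ f '' s) : t.ncard ≤ s.ncard :=
  (ncard_le_ncard h (hs.image f)).trans (ncard_image_le hs)

section Decomposition

def orientedPairOf (t : PointQuad) : Sym2 ((ℤ × ℤ) × (ℤ × ℤ)) :=
  s((t.1, t.2.1), (t.2.2.1, t.2.2.2))

variable (m n : ℕ)

lemma properPairs_finite : (ProperPairs m n).Finite := by
  refine ((grid4_finite m n).image orientedPairOf).subset ?_
  rintro _ ⟨A, B, C, D, rfl, hA, hB, hC, hD, -⟩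
  exact ⟨(A, B, C, D), ⟨hA, hB, hC, hD⟩, rfl⟩

lemma convexPrimePairs_finite : (ConvexPrimePairs m n).Finite := by
  refine ((grid4_finite m n).image (forgetOrientation ∘ orientedPairOf)).subset ?_
  rintro _ ⟨A, B, C, D, rfl, hA, hB, hC, hD, -⟩
  exact ⟨(A, B, C, D), ⟨hA, hB, hC, hD⟩, rfl⟩

lemma ncard_properPairs_diff_le :
    (ProperPairs m n \ genericProperPairs m n).ncard ≤ 4 * ((m * n) ^ 3 * (m + n)) := by
  refine (ncard_le_of_subset_image (f := orientedPairOf)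
    ((grid4_finite m n).subset (sep_subset _ _)) ?_).trans ncard_degenerateQuads_le
  rintro _ ⟨⟨A, B, C, D, rfl, hp⟩, hz⟩
  exact ⟨(A, B, C, D), ⟨⟨hp.1, hp.2.1, hp.2.2.1, hp.2.2.2.1⟩, hp.2.2.2.2.1.ne,
    hp.2.2.2.2.2.1.ne, fun hg => hz ⟨A, B, C, D, rfl, hp, hg⟩⟩, rfl⟩

lemma ncard_convexPrimePairs_diff_le :
    (ConvexPrimePairs m n \ genericConvexPrimePairs m n).ncard ≤ 4 * ((m * n) ^ 3 * (m + n)) := by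
  refine (ncard_le_of_subset_image (f := forgetOrientation ∘ orientedPairOf)
    ((grid4_finite m n).subset (sep_subset _ _)) ?_).trans ncard_degenerateQuads_le
  rintro _ ⟨⟨A, B, C, D, rfl, hA, hB, hC, hD, hAB, hCD, hc⟩, hz⟩
  exact ⟨(A, B, C, D), ⟨⟨hA, hB, hC, hD⟩, hAB.ne, hCD.ne,
    fun hg => hz ⟨A, B, C, D, rfl, hA, hB, hC, hD, hAB, hCD, hc, hg⟩⟩, rfl⟩

end Decomposition

/-- |q(m,n) − p(m,n)| ≤ K·m³n³(m+n). -/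
theorem q_eq_p_up_to_error :
    ∃ K : ℝ, ∀ m n : ℕ, 2 ≤ m → 2 ≤ n →
      |(qcount m n : ℝ) - (pcount m n : ℝ)| ≤
        K * (m : ℝ) ^ 3 * (n : ℝ) ^ 3 * ((m : ℝ) + (n : ℝ)) := by
  refine ⟨4, fun m n _ _ => ?_⟩
  have hq := ncard_sdiff_add_ncard_of_subset (genericProperPairs_subset m n)
    (properPairs_finite m n)
  have hp := ncard_sdiff_add_ncard_of_subset (genericConvexPrimePairs_subset m n)
    (convexPrimePairs_finite m n)
  rw [ncard_genericConvexPrimePairs] at hp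
  have hN : ((4 * ((m * n) ^ 3 * (m + n)) : ℕ) : ℝ) = 4 * (m : ℝ) ^ 3 * n ^ 3 * (m + n) := by
    push_cast
    ring
  rw [qcount, pcount, ← hq, ← hp, ← hN, Nat.cast_add, Nat.cast_add, add_sub_add_right_eq_sub]
  exact abs_sub_le_of_nonneg_of_le (Nat.cast_nonneg _)
    (by exact_mod_cast ncard_properPairs_diff_le m n) (Nat.cast_nonneg _)
    (by exact_mod_cast ncard_convexPrimePairs_diff_le m n)
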